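/- Let f be a linear space function on n points having a point of index 0, 1, or 2; relabel so that the point n has index at most 2, and let f' be the linear space function on {1,…,n−1} induced by f (so f'(S) = 1 if and only if S ⊆ T for some T with f(T) = 1). Then there exist polynomials μ_g(x) with integer coefficients, indexed by the linear space functions g on n−1 points with g ≥ f', such that for every finite projective plane Π of order q, B_f(Π) = Σ_{g ≥ f'} μ_g(q)·A_g(Π). In particular, B_f(Π) is expressible as a polynomial in q that is linear in the quantities A_g(Π). -/

import Mathlib

/-!
A weak realization of `f` is a weak realization `p'` of `f'` on the first `n` points together
with a point `x` outside `p'` that lies, for every full line `S` of `f` through the last point, on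
the line spanned by the points of `p'` indexed by `S` minus the last point. Grouping the `p'` by the
linear space function `g` they strongly realize, the number of admissible `x` depends only on `g`
and `q`: as the last point has index at most 2, the intersection of these lines is the whole plane
(`q² + q + 1` points), a line (`q + 1` points) or a single point, and one removes from it the points
of `p'` on it, whose number is read off `g`.
-/

open scoped Classical

structure ProjPlane (q : ℕ) where
  Point : Type
  fintypePoint : Fintype Point
  L : Set (Set Point)
  unique_line : ∀ p₁ p₂ : Point, p₁ ≠ p₂ → ∃! ℓ, ℓ ∈ L ∧ p₁ ∈ ℓ ∧ p₂ ∈ ℓ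
  unique_point : ∀ ℓ₁ ℓ₂, ℓ₁ ∈ L → ℓ₂ ∈ L → ℓ₁ ≠ ℓ₂ → ∃! p, p ∈ ℓ₁ ∧ p ∈ ℓ₂
  nondegenerate : ∃ a b c d : Point, a ≠ b ∧ a ≠ c ∧ a ≠ d ∧ b ≠ c ∧ b ≠ d ∧ c ≠ d ∧
    ∀ ℓ ∈ L, ¬({a, b, c} ⊆ ℓ) ∧ ¬({a, b, d} ⊆ ℓ) ∧ ¬({a, c, d} ⊆ ℓ) ∧ ¬({b, c, d} ⊆ ℓ)
  line_card : ∀ ℓ ∈ L, ℓ.ncard = q + 1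
  point_card : ∀ p : Point, {ℓ ∈ L | p ∈ ℓ}.ncard = q + 1

/-- A set of points is collinear if it is contained in a line. -/
noncomputable def ProjPlane.Collinear {q : ℕ} (Pl : ProjPlane q) (s : Set Pl.Point) : Prop :=
  ∃ ℓ ∈ Pl.L, s ⊆ ℓ

/-- The number of ordered `n`-arcs of the plane. -/
noncomputable def ProjPlane.nArcs {q : ℕ} (Pl : ProjPlane q) (n : ℕ) : ℕ :=
  Nat.card {p : Fin n → Pl.Point // Function.Injective p ∧
    ∀ i j k : Fin n, i ≠ j → i ≠ k → j ≠ k → ¬ Pl.Collinear {p i, p j, p k}}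

/-- Number of ordered strong realizations of the Fano plane. -/
noncomputable def ProjPlane.A7 {q : ℕ} (Pl : ProjPlane q) : ℕ :=
  Nat.card {p : ZMod 7 → Pl.Point // Function.Injective p ∧
    ∃ σ : Equiv.Perm (ZMod 7), ∀ i j k : ZMod 7, i ≠ j → i ≠ k → j ≠ k →
      (Pl.Collinear {p (σ i), p (σ j), p (σ k)} ↔
        ∃ a : ZMod 7, ({i, j, k} : Set (ZMod 7)) = {a, a + 1, a + 3})}

/-- Number of ordered strong realizations of the Möbius–Kantor configuration. -/
noncomputable def ProjPlane.A8 {q : ℕ} (Pl : ProjPlane q) : ℕ :=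
  Nat.card {p : ZMod 8 → Pl.Point // Function.Injective p ∧
    ∃ σ : Equiv.Perm (ZMod 8), ∀ i j k : ZMod 8, i ≠ j → i ≠ k → j ≠ k →
      (Pl.Collinear {p (σ i), p (σ j), p (σ k)} ↔
        ∃ a : ZMod 8, ({i, j, k} : Set (ZMod 8)) = {a, a + 1, a + 3})}

/-- A boolean `m`-function (a function from subsets of the `m`-point set to
`{0,1}`) is a linear space function if collinear sets are downward closed,
all sets of at most 2 points are collinear, and two collinear sets meeting in
at least 2 points have collinear union. -/
def IsLSF {m : ℕ} (f : Finset (Fin m) → Bool) : Prop :=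
  (∀ I J : Finset (Fin m), J ⊆ I → f I = true → f J = true) ∧
  (∀ I : Finset (Fin m), I.card ≤ 2 → f I = true) ∧
  (∀ I J : Finset (Fin m), f I = true → f J = true → 2 ≤ (I ∩ J).card →
    f (I ∪ J) = true)

/-- A full line of `f`: a set of at least 3 points mapped to 1 by `f`, maximal
with respect to inclusion among sets mapped to 1. -/
def IsFullLine {m : ℕ} (f : Finset (Fin m) → Bool) (S : Finset (Fin m)) : Prop :=
  3 ≤ S.card ∧ f S = true ∧ ∀ T : Finset (Fin m), S ⊆ T → f T = true → T = S

/-- The index of a point: the number of full lines containing it. -/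
noncomputable def pointIndex {m : ℕ} (f : Finset (Fin m) → Bool) (p : Fin m) : ℕ :=
  Nat.card {S : Finset (Fin m) // IsFullLine f S ∧ p ∈ S}

/-- A superfiguration: a linear space function in which every point has index
at least 3 (every full line automatically has at least 3 points). -/
def IsSuperfiguration {m : ℕ} (f : Finset (Fin m) → Bool) : Prop :=
  IsLSF f ∧ ∀ p : Fin m, 3 ≤ pointIndex f p

/-- `A_f(Π)`: the number of strong realizations of the boolean `m`-function
`f` in the plane: tuples of distinct points such that `f⁻¹(1)` is exactly the
collection of subsets lying on a common line. -/
noncomputable def strongCount {q m : ℕ} (Pl : ProjPlane q)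
    (f : Finset (Fin m) → Bool) : ℕ :=
  Nat.card {p : Fin m → Pl.Point // Function.Injective p ∧
    ∀ S : Finset (Fin m), (f S = true ↔ ∃ ℓ ∈ Pl.L, ∀ i ∈ S, p i ∈ ℓ)}

/-- `B_f(Π) = Σ_{g ≥ f} A_g(Π)`, the sum over all boolean `m`-functions
`g ≥ f`; the number of weak realizations of `f` when `f` is a linear space
function. -/
noncomputable def weakCount {q m : ℕ} (Pl : ProjPlane q)
    (f : Finset (Fin m) → Bool) : ℕ :=
  ∑ g ∈ Finset.univ.filter
      (fun g : Finset (Fin m) → Bool => ∀ S, f S = true → g S = true),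
    strongCount Pl g

attribute [instance] ProjPlane.fintypePoint

open Finset Function Polynomial

theorem Pi.bool_le_iff {α : Type*} {f g : α → Bool} : f ≤ g ↔ ∀ a, f a = true → g a = true :=
  Pi.le_def.trans (forall_congr' fun _ => Bool.le_iff_imp)

theorem card_filter_eq_sum_card_filter_snoc {α : Type*} [Fintype α] {n : ℕ}
    (P : (Fin (n + 1) → α) → Prop) [DecidablePred P] :
    #{p | P p} = ∑ p' : Fin n → α, #{x | P (Fin.snoc p' x)} := by
  rw [card_filter, ← (Fin.snocEquiv fun _ => α).sum_comp, Fintype.sum_prod_type_right]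
  simp only [Fin.snocEquiv, Equiv.coe_fn_mk, card_filter]
  rfl

theorem card_preimage_castSucc {n : ℕ} {S : Finset (Fin (n + 1))} (h : Fin.last n ∈ S) :
    #(S.preimage Fin.castSucc (Fin.castSucc_injective n).injOn) = #S - 1 := by
  rw [card_preimage, ← card_erase_of_mem h, ← filter_ne']
  congr 1
  exact filter_congr fun i _ => Fin.exists_castSucc_eq

theorem Fin.image_snoc_of_last_mem {α : Type*} {n : ℕ} (p : Fin n → α) (x : α)
    {s : Set (Fin (n + 1))} (h : Fin.last n ∈ s) :
    Fin.snoc p x '' s = insert x (p '' (Fin.castSucc ⁻¹' s)) := by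
  ext y
  simp [Fin.exists_fin_succ', h, or_comm, eq_comm]

theorem Fin.image_snoc_of_last_notMem {α : Type*} {n : ℕ} (p : Fin n → α) (x : α)
    {s : Set (Fin (n + 1))} (h : Fin.last n ∉ s) :
    Fin.snoc p x '' s = p '' (Fin.castSucc ⁻¹' s) := by
  ext y
  simp [Fin.exists_fin_succ', h]

namespace ProjPlane

variable {q : ℕ} (Pl : ProjPlane q)

theorem exists_mem_line (a : Pl.Point) : ∃ ℓ ∈ Pl.L, a ∈ ℓ :=
  Set.nonempty_of_ncard_ne_zero (s := {ℓ ∈ Pl.L | a ∈ ℓ}) (by rw [Pl.point_card]; omega)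

variable {Pl}

theorem eq_of_nontrivial_subset {s : Set Pl.Point} (hs : s.Nontrivial) {ℓ₁ ℓ₂ : Set Pl.Point}
    (h₁ : ℓ₁ ∈ Pl.L) (h₂ : ℓ₂ ∈ Pl.L) (hs₁ : s ⊆ ℓ₁) (hs₂ : s ⊆ ℓ₂) : ℓ₁ = ℓ₂ := by
  obtain ⟨a, ha, b, hb, hab⟩ := hs
  exact (Pl.unique_line a b hab).unique ⟨h₁, hs₁ ha, hs₁ hb⟩ ⟨h₂, hs₂ ha, hs₂ hb⟩

theorem Collinear.subset {s t : Set Pl.Point} (ht : Pl.Collinear t) (hst : s ⊆ t) :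
    Pl.Collinear s :=
  let ⟨ℓ, hℓ, htℓ⟩ := ht
  ⟨ℓ, hℓ, hst.trans htℓ⟩

theorem Collinear.subset_line {s t ℓ : Set Pl.Point} (ht : Pl.Collinear t) (hs : s.Nontrivial)
    (hst : s ⊆ t) (hℓ : ℓ ∈ Pl.L) (hsℓ : s ⊆ ℓ) : t ⊆ ℓ := by
  obtain ⟨ℓ', hℓ', htℓ'⟩ := ht
  rwa [← eq_of_nontrivial_subset hs hℓ' hℓ (hst.trans htℓ') hsℓ]

theorem Collinear.union {s t : Set Pl.Point} (hs : Pl.Collinear s) (ht : Pl.Collinear t)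
    (hst : (s ∩ t).Nontrivial) : Pl.Collinear (s ∪ t) := by
  obtain ⟨ℓ, hℓ, hsℓ⟩ := hs
  exact ⟨ℓ, hℓ, Set.union_subset hsℓ
    (ht.subset_line hst Set.inter_subset_right hℓ (Set.inter_subset_left.trans hsℓ))⟩

theorem collinear_pair (a b : Pl.Point) : Pl.Collinear {a, b} := by
  rcases eq_or_ne a b with rfl | hab
  · obtain ⟨ℓ, hℓ, ha⟩ := Pl.exists_mem_line a
    exact ⟨ℓ, hℓ, by simpa using ha⟩
  · obtain ⟨ℓ, ⟨hℓ, ha, hb⟩, -⟩ := Pl.unique_line a b hab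
    exact ⟨ℓ, hℓ, Set.pair_subset ha hb⟩

theorem collinear_image_of_card_le_two {ι : Type*} (p : ι → Pl.Point) {S : Finset ι}
    (hS : #S ≤ 2) : Pl.Collinear (p '' S) := by
  rcases S.eq_empty_or_nonempty with rfl | ⟨i, hi⟩
  · obtain ⟨a, -⟩ := Pl.nondegenerate
    exact (collinear_pair a a).subset (by simp)
  have : Nonempty ι := ⟨i⟩
  obtain ⟨j, hj⟩ := card_le_one_iff_subset_singleton.1
    (show #(S.erase i) ≤ 1 by rw [card_erase_of_mem hi]; omega)
  refine (collinear_pair (p i) (p j)).subset ?_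
  rintro _ ⟨k, hk, rfl⟩
  rcases eq_or_ne k i with rfl | hki
  · exact Set.mem_insert _ _
  · simp [mem_singleton.1 (hj (mem_erase.2 ⟨hki, hk⟩))]

def span (s : Set Pl.Point) : Set Pl.Point :=
  {x | Pl.Collinear (insert x s)}

theorem mem_span {s : Set Pl.Point} {x : Pl.Point} :
    x ∈ Pl.span s ↔ Pl.Collinear (insert x s) :=
  Iff.rfl

theorem span_eq {s ℓ : Set Pl.Point} (hs : s.Nontrivial) (hℓ : ℓ ∈ Pl.L) (hsℓ : s ⊆ ℓ) :
    Pl.span s = ℓ := by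
  ext x
  exact ⟨fun hx => hx.subset_line hs (Set.subset_insert x s) hℓ hsℓ (Set.mem_insert x s),
    fun hx => ⟨ℓ, hℓ, Set.insert_subset hx hsℓ⟩⟩

variable (Pl)

theorem card_point : Fintype.card Pl.Point = q ^ 2 + q + 1 := by
  obtain ⟨a, -⟩ := Pl.nondegenerate
  set T := {ℓ ∈ Pl.L | a ∈ ℓ}.toFinset
  have hT : #T = q + 1 := by rw [← Pl.point_card a, Set.ncard_eq_toFinset_card']
  have hcover : univ.erase a = T.biUnion fun ℓ => ℓ.toFinset.erase a := by
    ext x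
    simp only [mem_erase, mem_univ, and_true, mem_biUnion, Set.mem_toFinset, T]
    constructor
    · intro hx
      obtain ⟨ℓ, ⟨hℓ, ha, hx'⟩, -⟩ := Pl.unique_line a x (Ne.symm hx)
      exact ⟨ℓ, ⟨hℓ, ha⟩, hx, hx'⟩
    · rintro ⟨ℓ, -, hx, -⟩
      exact hx
  have hdisj : (T : Set (Set Pl.Point)).PairwiseDisjoint fun ℓ => ℓ.toFinset.erase a := by
    intro ℓ₁ h₁ ℓ₂ h₂ hne
    simp only [T, Set.coe_toFinset] at h₁ h₂
    refine disjoint_left.2 fun x hx₁ hx₂ => hne ?_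
    simp only [mem_erase, Set.mem_toFinset] at hx₁ hx₂
    exact eq_of_nontrivial_subset (Set.nontrivial_pair hx₁.1.symm) h₁.1 h₂.1
      (Set.pair_subset h₁.2 hx₁.2) (Set.pair_subset h₂.2 hx₂.2)
  have hline : ∀ ℓ ∈ T, #(ℓ.toFinset.erase a) = q := by
    intro ℓ hℓ
    simp only [T, Set.mem_toFinset] at hℓ
    rw [card_erase_of_mem (Set.mem_toFinset.2 hℓ.2), ← Set.ncard_eq_toFinset_card',
      Pl.line_card ℓ hℓ.1, Nat.add_sub_cancel]
  calc Fintype.card Pl.Point = #(univ.erase a) + 1 := (card_erase_add_one (mem_univ a)).symm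
    _ = ∑ ℓ ∈ T, q + 1 := by rw [hcover, card_biUnion hdisj, sum_congr rfl hline]
    _ = q ^ 2 + q + 1 := by rw [sum_const, hT, smul_eq_mul]; ring

variable {Pl}

theorem ncard_inter_of_ne {ℓ₁ ℓ₂ : Set Pl.Point} (h₁ : ℓ₁ ∈ Pl.L) (h₂ : ℓ₂ ∈ Pl.L)
    (hne : ℓ₁ ≠ ℓ₂) : (ℓ₁ ∩ ℓ₂).ncard = 1 := by
  obtain ⟨x, hx, hxu⟩ := Pl.unique_point ℓ₁ ℓ₂ h₁ h₂ hne
  exact Set.ncard_eq_one.2 ⟨x, Set.eq_singleton_iff_unique_mem.2 ⟨hx, hxu⟩⟩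

theorem Collinear.exists_span_eq {s : Set Pl.Point} (hs : Pl.Collinear s) (hnt : s.Nontrivial) :
    ∃ ℓ ∈ Pl.L, s ⊆ ℓ ∧ Pl.span s = ℓ := by
  obtain ⟨ℓ, hℓ, hsℓ⟩ := hs
  exact ⟨ℓ, hℓ, hsℓ, span_eq hnt hℓ hsℓ⟩

theorem ncard_span {s : Set Pl.Point} (hs : Pl.Collinear s) (hnt : s.Nontrivial) :
    (Pl.span s).ncard = q + 1 := by
  obtain ⟨ℓ, hℓ, -, rfl⟩ := hs.exists_span_eq hnt
  exact Pl.line_card _ hℓ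

theorem ncard_span_inter_span {s t : Set Pl.Point} (hs : Pl.Collinear s) (hsnt : s.Nontrivial)
    (ht : Pl.Collinear t) (htnt : t.Nontrivial) :
    (Pl.span s ∩ Pl.span t).ncard = if Pl.Collinear (s ∪ t) then q + 1 else 1 := by
  obtain ⟨ℓ, hℓ, hsℓ, hs⟩ := hs.exists_span_eq hsnt
  obtain ⟨m, hm, htm, ht⟩ := ht.exists_span_eq htnt
  have hcol : Pl.Collinear (s ∪ t) ↔ ℓ = m := by
    refine ⟨fun h => eq_of_nontrivial_subset htnt hℓ hm ?_ htm, fun h => ⟨ℓ, hℓ, ?_⟩⟩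
    · exact h.subset_line hsnt Set.subset_union_left hℓ hsℓ |>.trans' Set.subset_union_right
    · exact Set.union_subset hsℓ (h ▸ htm)
  rw [hs, ht]
  split_ifs with h
  · rw [hcol.1 h, Set.inter_self, Pl.line_card m hm]
  · exact ncard_inter_of_ne hℓ hm (mt hcol.2 h)

variable (Pl)

noncomputable def lineType {ι : Type*} (p : ι → Pl.Point) (S : Finset ι) : Bool :=
  decide (Pl.Collinear (p '' S))

variable {Pl}

theorem lineType_eq_true {ι : Type*} {p : ι → Pl.Point} {S : Finset ι} :
    Pl.lineType p S = true ↔ Pl.Collinear (p '' S) :=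
  decide_eq_true_iff

theorem lineType_eq_true_iff_exists {ι : Type*} {p : ι → Pl.Point} {S : Finset ι} :
    Pl.lineType p S = true ↔ ∃ ℓ ∈ Pl.L, ∀ i ∈ S, p i ∈ ℓ := by
  simp only [lineType_eq_true, Collinear, Set.image_subset_iff]
  rfl

theorem isLSF_lineType {m : ℕ} {p : Fin m → Pl.Point} (hp : Injective p) :
    IsLSF (Pl.lineType p) := by
  simp only [IsLSF, lineType_eq_true]
  refine ⟨fun I J hJI hI => hI.subset (Set.image_mono (coe_subset.2 hJI)),
    fun I hI => collinear_image_of_card_le_two p hI, fun I J hI hJ hIJ => ?_⟩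
  rw [coe_union, Set.image_union]
  refine hI.union hJ (Set.Nontrivial.mono ?_ (Set.image_inter_subset p I J))
  exact (one_lt_card_iff_nontrivial.1 hIJ).image hp |>.mono (by rw [coe_inter])

theorem strongCount_eq_card {m : ℕ} (g : Finset (Fin m) → Bool) :
    strongCount Pl g = #{p | Injective p ∧ Pl.lineType p = g} := by
  rw [strongCount, Nat.card_eq_fintype_card, Fintype.card_subtype]
  refine congrArg card (filter_congr fun p _ => and_congr_right fun _ => ?_)
  rw [funext_iff]
  refine forall_congr' fun S => ?_
  rw [← lineType_eq_true_iff_exists, ← Bool.eq_iff_iff, eq_comm]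

theorem filter_filter_lineType_eq {m : ℕ} {f g : Finset (Fin m) → Bool} (hfg : f ≤ g) :
    ({p | Injective p ∧ f ≤ Pl.lineType p} : Finset (Fin m → Pl.Point)).filter
      (Pl.lineType · = g) = univ.filter fun p => Injective p ∧ Pl.lineType p = g := by
  rw [filter_filter]
  exact filter_congr fun p _ =>
    ⟨fun ⟨⟨hp, _⟩, hg⟩ => ⟨hp, hg⟩, fun ⟨hp, hg⟩ => ⟨⟨hp, hg ▸ hfg⟩, hg⟩⟩

theorem weakCount_eq_card {m : ℕ} (f : Finset (Fin m) → Bool) :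
    weakCount Pl f = #{p | Injective p ∧ f ≤ Pl.lineType p} := by
  rw [weakCount, card_eq_sum_card_fiberwise (f := Pl.lineType)
    (t := {g | ∀ S, f S = true → g S = true})
    (fun p hp => mem_filter.2 ⟨mem_univ _, Pi.bool_le_iff.1 (mem_filter.1 hp).2.2⟩)]
  refine sum_congr rfl fun g hg => ?_
  rw [strongCount_eq_card, filter_filter_lineType_eq (Pi.bool_le_iff.2 (mem_filter.1 hg).2)]

theorem sum_eq_sum_mul_strongCount {m : ℕ} {f : Finset (Fin m) → Bool}
    {E : (Fin m → Pl.Point) → ℤ} {e : (Finset (Fin m) → Bool) → ℤ}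
    (hE : ∀ p, Injective p → f ≤ Pl.lineType p → E p = e (Pl.lineType p)) :
    ∑ p with Injective p ∧ f ≤ Pl.lineType p, E p =
      ∑ g with IsLSF g ∧ ∀ S, f S = true → g S = true, e g * strongCount Pl g := by
  rw [← sum_fiberwise_of_maps_to (g := Pl.lineType)
    (t := {g | IsLSF g ∧ ∀ S, f S = true → g S = true}) fun p hp => ?_]
  · refine sum_congr rfl fun g hg => ?_
    have hfg : f ≤ g := Pi.bool_le_iff.2 (mem_filter.1 hg).2.2
    calc ∑ p ∈ _ with Pl.lineType p = g, E p
        = ∑ p with Injective p ∧ Pl.lineType p = g, e g :=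
          sum_congr (filter_filter_lineType_eq hfg) fun p hp => by
            obtain ⟨hinj, rfl⟩ := (mem_filter.1 hp).2
            exact hE p hinj hfg
      _ = e g * strongCount Pl g := by rw [sum_const, nsmul_eq_mul, mul_comm, strongCount_eq_card]
  · obtain ⟨hp, hle⟩ := (mem_filter.1 hp).2
    exact mem_filter.2 ⟨mem_univ _, isLSF_lineType hp, Pi.bool_le_iff.1 hle⟩

variable {ι : Type*}

theorem mem_span_image_iff {p : ι → Pl.Point} {T : Finset ι} {i : ι} :
    p i ∈ Pl.span (p '' T) ↔ Pl.lineType p (insert i T) = true := by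
  rw [lineType_eq_true, coe_insert, Set.image_insert_eq, mem_span]

theorem ncard_iInter_span {p : ι → Pl.Point} (hp : Injective p) {𝒯 : Finset (Finset ι)}
    (h𝒯 : #𝒯 ≤ 2) (hT : ∀ T ∈ 𝒯, 1 < #T ∧ Pl.lineType p T = true) :
    (⋂ T ∈ 𝒯, Pl.span (p '' T)).ncard =
      if 𝒯 = ∅ then q ^ 2 + q + 1 else if Pl.lineType p (𝒯.sup id) then q + 1 else 1 := by
  have hnt : ∀ T ∈ 𝒯, (p '' T).Nontrivial := fun T hT' =>
    (one_lt_card_iff_nontrivial.1 (hT T hT').1).image hp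
  have hcol : ∀ T ∈ 𝒯, Pl.Collinear (p '' T) := fun T hT' => lineType_eq_true.1 (hT T hT').2
  obtain h | h | h : #𝒯 = 0 ∨ #𝒯 = 1 ∨ #𝒯 = 2 := by omega
  · rw [card_eq_zero.1 h]
    simp [Set.ncard_univ, card_point]
  · obtain ⟨T, rfl⟩ := card_eq_one.1 h
    simp [hT T (mem_singleton_self T), ncard_span (hcol T (mem_singleton_self T))
      (hnt T (mem_singleton_self T))]
  · obtain ⟨T₁, T₂, -, rfl⟩ := card_eq_two.1 h
    simp only [mem_insert, mem_singleton, Set.iInter_iInter_eq_or_left, Set.iInter_iInter_eq_left,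
      insert_ne_empty, if_false, sup_insert, sup_singleton, id, Finset.sup_eq_union]
    rw [ncard_span_inter_span (hcol _ (by simp)) (hnt _ (by simp)) (hcol _ (by simp))
      (hnt _ (by simp))]
    simp only [lineType_eq_true, coe_union, Set.image_union]

def extensionSet (p : ι → Pl.Point) (𝒯 : Finset (Finset ι)) : Set Pl.Point :=
  (⋂ T ∈ 𝒯, Pl.span (p '' T)) \ Set.range p

noncomputable def extensionPoly [Fintype ι] (𝒯 : Finset (Finset ι)) (g : Finset ι → Bool) :
    ℤ[X] :=
  (if 𝒯 = ∅ then X ^ 2 + X + 1 else if g (𝒯.sup id) then X + 1 else 1) -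
    C (#{i | ∀ T ∈ 𝒯, g (insert i T) = true} : ℤ)

theorem ncard_extensionSet [Fintype ι] {p : ι → Pl.Point} (hp : Injective p)
    {𝒯 : Finset (Finset ι)} (h𝒯 : #𝒯 ≤ 2) (hT : ∀ T ∈ 𝒯, 1 < #T ∧ Pl.lineType p T = true) :
    ((extensionSet p 𝒯).ncard : ℤ) =
      (extensionPoly 𝒯 (Pl.lineType p)).eval (q : ℤ) := by
  have hpre : p ⁻¹' (⋂ T ∈ 𝒯, Pl.span (p '' T)) =
      ↑({i | ∀ T ∈ 𝒯, Pl.lineType p (insert i T) = true} : Finset ι) := by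
    ext i
    simp [mem_span_image_iff]
  have key := Set.ncard_inter_add_ncard_sdiff_eq_ncard (⋂ T ∈ 𝒯, Pl.span (p '' T)) (Set.range p)
  rw [← Set.image_preimage_eq_inter_range, Set.ncard_image_of_injective _ hp, hpre,
    Set.ncard_coe_finset, ncard_iInter_span hp h𝒯 hT] at key
  rw [extensionSet, extensionPoly, eval_sub, eval_C]
  zify at key
  split_ifs at key ⊢ <;> simp only [eval_add, eval_pow, eval_X, eval_one] <;> linarith

end ProjPlane

noncomputable def fullLineTraces {n : ℕ} (f : Finset (Fin (n + 1)) → Bool) :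
    Finset (Finset (Fin n)) :=
  ({S | IsFullLine f S ∧ Fin.last n ∈ S} : Finset _).image
    fun S => S.preimage Fin.castSucc (Fin.castSucc_injective n).injOn

def IsInduced {n : ℕ} (f' : Finset (Fin n) → Bool) (f : Finset (Fin (n + 1)) → Bool) : Prop :=
  ∀ S : Finset (Fin n), f' S = true ↔
    ∃ T : Finset (Fin (n + 1)), f T = true ∧ S.image Fin.castSucc ⊆ T

section InducedFunction

variable {n : ℕ} {f : Finset (Fin (n + 1)) → Bool} {f' : Finset (Fin n) → Bool}

theorem card_fullLineTraces_le : #(fullLineTraces f) ≤ pointIndex f (Fin.last n) := by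
  rw [pointIndex, Nat.card_eq_fintype_card, Fintype.card_subtype]
  exact card_image_le

theorem IsInduced.one_lt_card_and_eq_true_of_mem_fullLineTraces {T : Finset (Fin n)}
    (hf' : IsInduced f' f) (hT : T ∈ fullLineTraces f) : 1 < #T ∧ f' T = true := by
  obtain ⟨S, hS, rfl⟩ := mem_image.1 hT
  obtain ⟨⟨hS3, hfS, -⟩, hlast⟩ := (mem_filter.1 hS).2
  exact ⟨by rw [card_preimage_castSucc hlast]; omega,
    (hf' _).2 ⟨S, hfS, image_subset_iff.2 fun _ => mem_preimage.1⟩⟩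

theorem IsInduced.le_lineType_snoc_iff {q : ℕ} {Pl : ProjPlane q} {p' : Fin n → Pl.Point}
    {x : Pl.Point} (hf' : IsInduced f' f) : f ≤ Pl.lineType (Fin.snoc p' x) ↔
      f' ≤ Pl.lineType p' ∧ ∀ T ∈ fullLineTraces f, x ∈ Pl.span (p' '' T) := by
  simp only [Pi.le_def, Bool.le_iff_imp, ProjPlane.lineType_eq_true]
  constructor
  · intro h
    refine ⟨fun S hS => ?_, ?_⟩
    · obtain ⟨T, hT, hST⟩ := (hf' S).1 hS
      refine (h T hT).subset ?_
      rintro _ ⟨i, hi, rfl⟩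
      exact ⟨i.castSucc, hST (mem_image_of_mem _ hi), Fin.snoc_castSucc ..⟩
    · intro T hT
      obtain ⟨S, hS, rfl⟩ := mem_image.1 hT
      obtain ⟨⟨-, hfS, -⟩, hlast⟩ := (mem_filter.1 hS).2
      rw [ProjPlane.mem_span, coe_preimage,
        ← Fin.image_snoc_of_last_mem p' x (mem_coe.2 hlast)]
      exact h S hfS
  · rintro ⟨h', hx⟩ S hS
    by_cases hlast : Fin.last n ∈ S
    · by_cases hS2 : #S ≤ 2
      · exact ProjPlane.collinear_image_of_card_le_two _ hS2
      obtain ⟨T, hST, hT⟩ := Finite.exists_le_maximal (p := fun T => f T = true) hS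
      have hline : IsFullLine f T := ⟨(by omega : 3 ≤ #S).trans (card_le_card hST), hT.prop,
        fun U hTU hU => (hT.eq_of_le hU hTU).symm⟩
      have hxT := hx _ (mem_image_of_mem _ (mem_filter.2 ⟨mem_univ _, hline, hST hlast⟩))
      rw [ProjPlane.mem_span, coe_preimage,
        ← Fin.image_snoc_of_last_mem p' x (mem_coe.2 (hST hlast))] at hxT
      exact hxT.subset (Set.image_mono (coe_subset.2 hST))
    · rw [Fin.image_snoc_of_last_notMem p' x (mt mem_coe.1 hlast), ← coe_preimage _
        (Fin.castSucc_injective n).injOn]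
      exact h' _ ((hf' _).2 ⟨S, hS, image_subset_iff.2 fun _ => mem_preimage.1⟩)

theorem IsInduced.weakCount_eq_sum_ncard_extensionSet {q : ℕ} {Pl : ProjPlane q}
    (hf' : IsInduced f' f) :
    weakCount Pl f = ∑ p' with Injective p' ∧ f' ≤ Pl.lineType p',
      (Pl.extensionSet p' (fullLineTraces f)).ncard := by
  rw [ProjPlane.weakCount_eq_card, card_filter_eq_sum_card_filter_snoc, sum_filter]
  refine sum_congr rfl fun p' _ => ?_
  simp_rw [Fin.snoc_injective_iff, hf'.le_lineType_snoc_iff]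
  split_ifs with h
  · rw [← Set.ncard_coe_finset, coe_filter_univ, ProjPlane.extensionSet]
    congr 1
    ext x
    simp [h, and_comm]
  · rw [card_eq_zero, filter_eq_empty_iff]
    rintro x - ⟨⟨hinj, -⟩, hle, -⟩
    exact h ⟨hinj, hle⟩

end InducedFunction

theorem weakCount_formula_general (n : ℕ) (f : Finset (Fin (n + 1)) → Bool)
    (hidx : pointIndex f (Fin.last n) ≤ 2)
    (f' : Finset (Fin n) → Bool)
    (hf' : ∀ S : Finset (Fin n), f' S = true ↔
      ∃ T : Finset (Fin (n + 1)), f T = true ∧ S.image Fin.castSucc ⊆ T) :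
    ∃ μ : (Finset (Fin n) → Bool) → Polynomial ℤ,
      ∀ (q : ℕ) (Pl : ProjPlane q),
        (weakCount Pl f : ℤ) =
          ∑ g ∈ Finset.univ.filter
              (fun g : Finset (Fin n) → Bool =>
                IsLSF g ∧ ∀ S, f' S = true → g S = true),
            (μ g).eval (q : ℤ) * (strongCount Pl g : ℤ) := by
  refine ⟨ProjPlane.extensionPoly (fullLineTraces f), fun q Pl => ?_⟩
  rw [IsInduced.weakCount_eq_sum_ncard_extensionSet hf', Nat.cast_sum]
  refine ProjPlane.sum_eq_sum_mul_strongCount fun p' hp' hle =>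
    ProjPlane.ncard_extensionSet hp' (card_fullLineTraces_le.trans hidx) fun T hT => ?_
  obtain ⟨hT1, hf'T⟩ := IsInduced.one_lt_card_and_eq_true_of_mem_fullLineTraces hf' hT
  exact ⟨hT1, Bool.le_iff_imp.1 (hle T) hf'T⟩

/-- If a linear space function `f` on `n + 1` points has a point (labelled as
the last point) of index at most 2, and `f'` is the induced linear space
function on the remaining `n` points, then there are integer polynomials
`μ_g`, indexed by the linear space functions `g ≥ f'` on `n` points, such that
`B_f(Π) = Σ_{g ≥ f'} μ_g(q)·A_g(Π)` for every finite projective plane `Π` of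
order `q`; in particular `B_f(Π)` is polynomial in `q` and linear in the
`A_g(Π)`. -/
theorem weakCount_formula (n : ℕ) (f : Finset (Fin (n + 1)) → Bool)
    (hf : IsLSF f) (hidx : pointIndex f (Fin.last n) ≤ 2)
    (f' : Finset (Fin n) → Bool)
    (hf' : ∀ S : Finset (Fin n), f' S = true ↔
      ∃ T : Finset (Fin (n + 1)), f T = true ∧ S.image Fin.castSucc ⊆ T) :
    ∃ μ : (Finset (Fin n) → Bool) → Polynomial ℤ,
      ∀ (q : ℕ) (Pl : ProjPlane q),
        (weakCount Pl f : ℤ) =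
          ∑ g ∈ Finset.univ.filter
              (fun g : Finset (Fin n) → Bool =>
                IsLSF g ∧ ∀ S, f' S = true → g S = true),
            (μ g).eval (q : ℤ) * (strongCount Pl g : ℤ) :=
  weakCount_formula_general n f hidx f' hf'
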